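/- Let r_n be the number of R-colorings of size n of lambda skeletons of degree 0 (equivalently, the number of closed normal planar lambda terms of size n), and let R₀(z) = Σ_{n≥0} r_n zⁿ ∈ ℚ[[z]]. Then R₀ satisfies the algebraic identity (54·z·R₀(z) + 1 − 18·z)² = (1 − 12·z)³ in ℚ[[z]] (equivalently, R₀(z) = −(1/(54z))(1 − 18z − (1−12z)^{3/2})). -/

import Mathlib

/-- Lambda skeletons `Λ̃(i)`, graded by degree. -/
inductive Skel : ℕ → Type
  | leaf : Skel 1
  | app : {j k : ℕ} → Skel j → Skel k → Skel (j + k)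
  | lam : {i : ℕ} → Skel (i + 1) → Skel i

/-- The two colors: `B` ("blue", neutral) and `R` ("red", normal). -/
inductive Color : Type
  | B : Color
  | R : Color
  deriving DecidableEq

/-- `Col c i p`: colorings (derivations of neutrality for `c = B`,
respectively normality for `c = R`) of the skeleton `p` of degree `i`,
by the rules (v), (a), (s), (ℓ). -/
inductive Col : Color → (i : ℕ) → Skel i → Type
  | v : Col Color.B 1 Skel.leaf
  | a {j k : ℕ} {p : Skel j} {q : Skel k} :
      Col Color.B j p → Col Color.R k q → Col Color.B (j + k) (Skel.app p q)
  | s {i : ℕ} {p : Skel i} : Col Color.B i p → Col Color.R i p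
  | l {i : ℕ} {p : Skel (i + 1)} : Col Color.R (i + 1) p → Col Color.R i (Skel.lam p)

/-- The size of a coloring: the number of uses of the s-rule in it. -/
def Col.size : {c : Color} → {i : ℕ} → {p : Skel i} → Col c i p → ℕ
  | _, _, _, Col.v => 0
  | _, _, _, Col.a d e => d.size + e.size
  | _, _, _, Col.s d => d.size + 1
  | _, _, _, Col.l d => d.size

/-- The number of colorings of color `c` and size `n` of lambda skeletons
of degree `i`. -/
noncomputable def colCount (c : Color) (n i : ℕ) : ℕ :=
  Nat.card { pp : (p : Skel i) × Col c i p // Col.size pp.2 = n }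


/-- The generating function `R₀(z) ∈ ℚ[[z]]` counting R-colorings of lambda
skeletons of degree 0 (closed normal planar lambda terms) by size. -/
noncomputable def R0 : PowerSeries ℚ :=
  PowerSeries.mk fun n => (colCount Color.R n 0 : ℚ)

/-!
Let `B, R ∈ ℚ[x]⟦z⟧` count B- and R-colorings by `x ^ degree * z ^ size`. Rules (v) and (a) give
`B = x + B R`, rules (s) and (ℓ) give `(x - 1) R = x z B - R₀`. Eliminating `B`, `R` satisfies a
quadratic equation whose discriminant `Δ` is a cubic polynomial in `x` over `ℚ⟦z⟧`, and
`P = 2 (x - 1) R + R₀ - x + 1` satisfies `P² = Δ`. As `P(x, 0) = 1 - x`, a `z`-adic fixed point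
argument gives a series `Y(z)` with `P(Y, z) = 0` (the kernel method). Then `Y` is a double root of
`Δ`, and eliminating `Y` from `Δ(Y) = Δ'(Y) = 0` leaves the claimed equation for `R₀`.
-/

open Finset
open scoped Polynomial

/-- Both sides sum `F` over the `2 × 2` matrices with entries summing to `m`, grouped by row sums
and by column sums respectively. -/
theorem Finset.Nat.sum_antidiagonal_antidiagonal_transpose {M : Type*} [AddCommMonoid M] (m : ℕ)
    (F : ℕ → ℕ → ℕ → ℕ → M) :
    ∑ p ∈ antidiagonal m, ∑ q ∈ antidiagonal p.1, ∑ r ∈ antidiagonal p.2, F q.1 q.2 r.1 r.2 =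
      ∑ p ∈ antidiagonal m, ∑ q ∈ antidiagonal p.1, ∑ r ∈ antidiagonal p.2, F q.1 r.1 q.2 r.2 := by
  simp_rw [← Finset.sum_product', Finset.sum_sigma']
  let τ : (Σ _ : ℕ × ℕ, (ℕ × ℕ) × (ℕ × ℕ)) → Σ _ : ℕ × ℕ, (ℕ × ℕ) × (ℕ × ℕ) :=
    fun x => ⟨(x.2.1.1 + x.2.2.1, x.2.1.2 + x.2.2.2), (x.2.1.1, x.2.2.1), (x.2.1.2, x.2.2.2)⟩
  have hτ : ∀ x ∈ (antidiagonal m).sigma fun p => antidiagonal p.1 ×ˢ antidiagonal p.2,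
      τ x ∈ (antidiagonal m).sigma (fun p => antidiagonal p.1 ×ˢ antidiagonal p.2) ∧
        τ (τ x) = x := by
    rintro ⟨⟨a, b⟩, ⟨q₁, q₂⟩, ⟨r₁, r₂⟩⟩ hx
    simp only [mem_sigma, mem_product, HasAntidiagonal.mem_antidiagonal] at hx
    obtain ⟨rfl, rfl, rfl⟩ := hx
    simp only [τ, mem_sigma, mem_product, HasAntidiagonal.mem_antidiagonal, and_true]
    omega
  exact Finset.sum_nbij' τ τ (fun x hx => (hτ x hx).1) (fun x hx => (hτ x hx).1)
    (fun x hx => (hτ x hx).2) (fun x hx => (hτ x hx).2) fun _ _ => rfl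

theorem Polynomial.coeff_sum_X_pow {R α : Type*} [Semiring R] [Fintype α] (f : α → ℕ) (i : ℕ) :
    (∑ a, (Polynomial.X : R[X]) ^ f a).coeff i = Nat.card { a // f a = i } := by
  simp [Polynomial.coeff_X_pow, Finset.sum_boole, eq_comm, Nat.card_eq_fintype_card,
    Fintype.card_subtype]

namespace PowerSeries

section Diagonal

variable {R : Type*} [CommSemiring R]

/-- `∑ₙ fₙ(X) Yⁿ ↦ ∑ₙ fₙ(X) Xⁿ`: the outer variable is set equal to the inner one. -/
noncomputable def diagonal : R⟦X⟧⟦X⟧ →+* R⟦X⟧ where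
  toFun f := mk fun m => ∑ p ∈ antidiagonal m, coeff p.2 (coeff p.1 f)
  map_one' := by
    ext m
    rw [coeff_mk, sum_eq_single (0, m) (fun p hp hp0 => ?_) (by simp)]
    · simp
    · have : p.1 ≠ 0 := fun h => hp0 (Prod.ext h (by simpa [h] using mem_antidiagonal.1 hp))
      simp [coeff_one, this]
  map_mul' f g := by
    ext m
    simp only [coeff_mk, coeff_mul, map_sum, sum_mul_sum]
    exact Finset.Nat.sum_antidiagonal_antidiagonal_transpose m
      fun a b c d => coeff c (coeff a f) * coeff d (coeff b g)
  map_zero' := by ext; simp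
  map_add' f g := by ext; simp [sum_add_distrib]

theorem coeff_diagonal (f : R⟦X⟧⟦X⟧) (m : ℕ) :
    coeff m (diagonal f) = ∑ p ∈ antidiagonal m, coeff p.2 (coeff p.1 f) := by
  simp [diagonal]

theorem diagonal_C (g : R⟦X⟧) : diagonal (C g) = g := by
  ext m
  rw [coeff_diagonal, sum_eq_single (0, m) (fun p hp hp0 => ?_) (by simp)]
  · simp
  · have : p.1 ≠ 0 := fun h => hp0 (Prod.ext h (by simpa [h] using mem_antidiagonal.1 hp))
    simp [coeff_C, this]

theorem diagonal_X : diagonal (X : R⟦X⟧⟦X⟧) = X := by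
  ext (_ | m)
  · simp [coeff_diagonal]
  rw [coeff_diagonal, sum_eq_single (1, m) (fun p hp hp1 => ?_) (by simp [add_comm])]
  · simp [coeff_X]
  · have : p.1 ≠ 1 := fun h => hp1 (Prod.ext h (by simp at hp; omega))
    simp [coeff_X, this]

theorem diagonal_map_C (g : R⟦X⟧) : diagonal (map (C : R →+* R⟦X⟧) g) = g := by
  ext m
  rw [coeff_diagonal, sum_eq_single (m, 0) (fun p hp hp0 => ?_) (by simp)]
  · simp
  · have : p.2 ≠ 0 := fun h => hp0 (Prod.ext (by simpa [h] using mem_antidiagonal.1 hp) h)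
    simp [coeff_C, this]

theorem X_pow_dvd_diagonal {k : ℕ} {f : R⟦X⟧⟦X⟧} (h : ∀ n, X ^ k ∣ coeff n f) :
    X ^ k ∣ diagonal f := by
  choose q hq using h
  have hf : f = C (X ^ k) * mk q := by ext n : 1; rw [coeff_C_mul, coeff_mk, hq n]
  rw [hf, map_mul, diagonal_C]
  exact dvd_mul_right _ _

end Diagonal

section PolyVar

variable {R : Type*} [CommRing R]

/-- `f(x, X) ↦ f(Y, X)`: the power series `Y` is substituted for the polynomial variable `x` of
the coefficients. -/
noncomputable def substPolyVar (Y : R⟦X⟧) : R[X]⟦X⟧ →+* R⟦X⟧ :=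
  diagonal.comp (map (Polynomial.aeval Y).toRingHom)

@[simp]
theorem substPolyVar_C (Y : R⟦X⟧) (p : R[X]) : substPolyVar Y (C p) = Polynomial.aeval Y p := by
  simp [substPolyVar, diagonal_C]

@[simp]
theorem substPolyVar_X (Y : R⟦X⟧) : substPolyVar Y X = X := by
  simp [substPolyVar, diagonal_X]

@[simp]
theorem substPolyVar_map_C (Y g : R⟦X⟧) : substPolyVar Y (map Polynomial.C g) = g := by
  have : (Polynomial.aeval Y).toRingHom.comp Polynomial.C = C := by ext; simp
  rw [substPolyVar, RingHom.comp_apply, ← RingHom.comp_apply (map _), ← map_comp, this,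
    diagonal_map_C]

theorem X_pow_dvd_substPolyVar_sub {k : ℕ} {Y Y' : R⟦X⟧} (h : X ^ k ∣ Y - Y') (f : R[X]⟦X⟧) :
    X ^ k ∣ substPolyVar Y f - substPolyVar Y' f := by
  simp only [substPolyVar, RingHom.comp_apply, ← map_sub]
  refine X_pow_dvd_diagonal fun n => h.trans ?_
  simpa [Polynomial.aeval_def, Polynomial.eval₂_eq_eval_map] using
    Polynomial.sub_dvd_eval_sub Y Y' ((coeff n f).map (algebraMap R R⟦X⟧))

theorem exists_fixedPoint_of_X_pow_dvd_sub (T : R⟦X⟧ → R⟦X⟧)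
    (hT : ∀ k Y Y', X ^ k ∣ Y - Y' → X ^ (k + 1) ∣ T Y - T Y') : ∃ Y, T Y = Y := by
  let u (k : ℕ) : R⟦X⟧ := T^[k] 0
  have hu : ∀ k j, X ^ k ∣ u (k + j) - u k := by
    intro k
    induction k with
    | zero => simp
    | succ k ih =>
      intro j
      simpa only [u, Nat.succ_add, Function.iterate_succ_apply'] using hT _ _ _ (ih j)
  let Y := mk fun m => coeff m (u (m + 1))
  have hY : ∀ k, X ^ k ∣ Y - u k := by
    refine fun k => X_pow_dvd_iff.2 fun m hm => ?_
    obtain ⟨j, rfl⟩ := Nat.exists_eq_add_of_lt hm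
    have := X_pow_dvd_iff.1 (hu (m + 1) j) m (Nat.lt_succ_self m)
    rw [map_sub, sub_eq_zero] at this
    rw [map_sub, coeff_mk, add_right_comm, this, sub_self]
  refine ⟨Y, ext fun k => ?_⟩
  have hTY : X ^ (k + 1) ∣ T Y - u (k + 1) := by
    rw [show u (k + 1) = T (u k) from Function.iterate_succ_apply' T k 0]
    exact hT _ _ _ (hY k)
  have := X_pow_dvd_iff.1 (dvd_sub hTY (hY (k + 1))) k (Nat.lt_succ_self k)
  rwa [sub_sub_sub_cancel_right, map_sub, sub_eq_zero] at this

theorem exists_substPolyVar_eq_zero (f : R[X]⟦X⟧) (c : R)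
    (hf : constantCoeff f = Polynomial.C c - Polynomial.X) :
    ∃ Y, constantCoeff Y = c ∧ substPolyVar Y f = 0 := by
  set g := mk fun n => coeff (n + 1) f
  have hf' : f = X * g + C (Polynomial.C c - Polynomial.X) := hf ▸ eq_X_mul_shift_add_const f
  have hsubst (Y : R⟦X⟧) : substPolyVar Y f = (C c + X * substPolyVar Y g) - Y := by
    rw [hf']
    simp only [map_add, map_mul, map_sub, substPolyVar_X, substPolyVar_C, Polynomial.aeval_C,
      algebraMap_eq, Polynomial.aeval_X]
    ring
  obtain ⟨Y, hY⟩ := exists_fixedPoint_of_X_pow_dvd_sub (fun Y => C c + X * substPolyVar Y g)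
    fun k Y Y' h => by
      rw [add_sub_add_left_eq_sub, ← mul_sub, pow_succ']
      exact mul_dvd_mul_left X (X_pow_dvd_substPolyVar_sub h g)
  refine ⟨Y, ?_, by rw [hsubst, hY, sub_self]⟩
  rw [← hY]
  simp

noncomputable def derivativePolyVar : Derivation R R[X]⟦X⟧ R[X]⟦X⟧ :=
  Derivation.mk'
    { toFun := fun f => mk fun n => Polynomial.derivative (coeff n f)
      map_add' := fun f g => by ext; simp
      map_smul' := fun r f => by ext; simp }
    fun f g => by
      ext n : 1
      simp only [LinearMap.coe_mk, AddHom.coe_mk, smul_eq_mul, mul_comm g, map_add, coeff_mul,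
        coeff_mk, map_sum, Polynomial.derivative_mul, sum_add_distrib, add_comm]

theorem coeff_derivativePolyVar (f : R[X]⟦X⟧) (n : ℕ) :
    coeff n (derivativePolyVar f) = Polynomial.derivative (coeff n f) := by
  simp [derivativePolyVar]

@[simp]
theorem derivativePolyVar_C (p : R[X]) :
    derivativePolyVar (C p) = C (Polynomial.derivative p) := by
  ext n : 1
  rw [coeff_derivativePolyVar, coeff_C, coeff_C]
  split_ifs <;> simp

@[simp]
theorem derivativePolyVar_map_C (g : R⟦X⟧) : derivativePolyVar (map Polynomial.C g) = 0 := by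
  ext n : 1
  simp [coeff_derivativePolyVar]

theorem derivativePolyVar_eval₂ (δ : R⟦X⟧[X]) :
    derivativePolyVar (δ.eval₂ (map Polynomial.C) (C Polynomial.X)) =
      (Polynomial.derivative δ).eval₂ (map Polynomial.C) (C Polynomial.X) := by
  induction δ using Polynomial.induction_on' with
  | add p q hp hq => simp [hp, hq]
  | monomial n a =>
    simp only [Polynomial.eval₂_monomial, Derivation.leibniz, Derivation.leibniz_pow,
      derivativePolyVar_C, Polynomial.derivative_X, map_one, smul_eq_mul, mul_one, nsmul_eq_mul,
      derivativePolyVar_map_C, mul_zero, add_zero, Polynomial.derivative_monomial, map_mul,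
      map_natCast]
    ring

theorem substPolyVar_eval₂ (Y : R⟦X⟧) (δ : R⟦X⟧[X]) :
    substPolyVar Y (δ.eval₂ (map Polynomial.C) (C Polynomial.X)) = δ.eval Y := by
  have : (substPolyVar Y).comp (map Polynomial.C) = RingHom.id _ := by ext1; simp
  rw [Polynomial.hom_eval₂, this, substPolyVar_C, Polynomial.aeval_X, Polynomial.eval₂_id]

theorem eval_eq_zero_and_derivative_eval_eq_zero_of_sq_eq {P : R[X]⟦X⟧} {δ : R⟦X⟧[X]}
    (h : P ^ 2 = δ.eval₂ (map Polynomial.C) (C Polynomial.X)) {Y : R⟦X⟧}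
    (hY : substPolyVar Y P = 0) : δ.eval Y = 0 ∧ (Polynomial.derivative δ).eval Y = 0 := by
  constructor
  · rw [← substPolyVar_eval₂, ← h, map_pow, hY, zero_pow two_ne_zero]
  · have := congrArg (substPolyVar Y) (congrArg derivativePolyVar h)
    rw [derivativePolyVar_eval₂, substPolyVar_eval₂, Derivation.leibniz_pow] at this
    rw [← this]
    simp [hY]

end PolyVar

end PowerSeries

section Elimination

open Polynomial

variable {S : Type*} [CommRing S]

/-- The discriminant of the quadratic `(x - 1) R² + (r - x + 1) R + (x² z - r) = 0` in `R`. -/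
noncomputable def quadDiscr (r z : S) : S[X] :=
  (C r - X + 1) ^ 2 - 4 * (X - 1) * (X ^ 2 * C z - C r)

theorem sq_eq_cube_of_quadDiscr_double_root [IsDomain S] {r z Y : S} (h2 : (2 : S) ≠ 0)
    (hz : z ≠ 0) (hY : Y ≠ 0) (h : (quadDiscr r z).eval Y = 0)
    (h' : (derivative (quadDiscr r z)).eval Y = 0) :
    (54 * z * r + 1 - 18 * z) ^ 2 = (1 - 12 * z) ^ 3 := by
  have hΔ : (r - Y + 1) ^ 2 - 4 * (Y - 1) * (z * Y ^ 2 - r) = 0 := by simpa [quadDiscr] using h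
  have hΔ' : -2 * (r - Y + 1) - 4 * (z * Y ^ 2 - r) - 8 * (Y - 1) * z * Y = 0 := by
    rw [← h']
    simp [quadDiscr, derivative_pow]
    ring
  have hr : r = 1 - Y + 6 * z * Y ^ 2 - 4 * z * Y :=
    mul_left_cancel₀ h2 (by linear_combination hΔ')
  have hK : 9 * z * Y ^ 2 - (1 + 12 * z) * Y + (1 + 4 * z) = 0 := by
    have h4 : (4 : S) ≠ 0 := by
      rw [show (4 : S) = 2 * 2 by norm_num]
      exact mul_ne_zero h2 h2
    refine (mul_eq_zero.1 ?_).resolve_left (mul_ne_zero (mul_ne_zero h4 hz) (pow_ne_zero 2 hY))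
    -- `Δ(Y) = 4 z Y² (9 z Y² - (1 + 12 z) Y + 1 + 4 z)` once `r` is eliminated
    linear_combination hΔ - (2 * Y + (r - 1) + (6 * z * Y ^ 2 - (1 + 4 * z) * Y)) * hr
  -- modulo `hr` and `hK`: `54 z r + 1 - 18 z = (1 - 12 z) (1 + 12 z - 18 z Y)` and
  -- `(1 + 12 z - 18 z Y)² = 1 - 12 z`
  linear_combination
    (54 * z * r + 1 - 18 * z + (1 - 12 * z) * (1 + 12 * z - 18 * z * Y)) * 18 * z *
        (3 * hr + 2 * hK) + 36 * z * (1 - 12 * z) ^ 2 * hK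

end Elimination

abbrev Colorings (c : Color) (n i : ℕ) : Type :=
  { pp : (p : Skel i) × Col c i p // Col.size pp.2 = n }

abbrev ColoringsOfSize (c : Color) (n : ℕ) : Type := (i : ℕ) × Colorings c n i

theorem Col.size_pos : {i : ℕ} → {p : Skel i} → (d : Col Color.R i p) → 0 < d.size
  | _, _, .s _ => Nat.succ_pos _
  | _, _, .l d => d.size_pos

theorem Col.deg_le_size {c : Color} {i : ℕ} {p : Skel i} (d : Col c i p) :
    i ≤ d.size + if c = Color.B then 1 else 0 := by
  induction d with
  | v => simp [Col.size]
  | a d e ihd ihe => simp only [Col.size, if_true, reduceCtorEq, if_false] at *; omega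
  | s d ih => simp only [Col.size, if_true, reduceCtorEq, if_false] at *; omega
  | l d ih => simp only [Col.size, reduceCtorEq, if_false] at *; omega

theorem isEmpty_colorings_R_zero (i : ℕ) : IsEmpty (Colorings Color.R 0 i) :=
  ⟨fun ⟨⟨_, d⟩, hd⟩ => d.size_pos.ne' hd⟩

theorem isEmpty_coloringsOfSize_R_zero : IsEmpty (ColoringsOfSize Color.R 0) :=
  ⟨fun x => (isEmpty_colorings_R_zero x.1).false x.2⟩

theorem isEmpty_colorings_of_lt {c : Color} {n i : ℕ} (h : n + 1 < i) :
    IsEmpty (Colorings c n i) :=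
  ⟨fun ⟨⟨_, d⟩, hd⟩ => by
    have := d.deg_le_size
    dsimp only at hd
    split_ifs at this <;> omega⟩

def coloringsRSuccEquiv (n i : ℕ) :
    Colorings Color.R (n + 1) i ≃ Colorings Color.B n i ⊕ Colorings Color.R (n + 1) (i + 1) where
  toFun
    | ⟨⟨_, .s d⟩, h⟩ => .inl ⟨⟨_, d⟩, Nat.succ_injective h⟩
    | ⟨⟨_, .l d⟩, h⟩ => .inr ⟨⟨_, d⟩, h⟩
  invFun
    | .inl ⟨⟨p, d⟩, h⟩ => ⟨⟨p, .s d⟩, congrArg (· + 1) h⟩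
    | .inr ⟨⟨p, d⟩, h⟩ => ⟨⟨.lam p, .l d⟩, h⟩
  left_inv := by rintro ⟨⟨_, d | d⟩, h⟩ <;> rfl
  right_inv := by rintro (_ | _) <;> rfl

def coloringsOfSizeBEquiv (n : ℕ) :
    ColoringsOfSize Color.B n ≃ PLift (n = 0) ⊕
      (m : antidiagonal n) × ColoringsOfSize Color.B m.1.1 × ColoringsOfSize Color.R m.1.2 where
  toFun
    | ⟨_, ⟨⟨_, .v⟩, h⟩⟩ => .inl ⟨h.symm⟩
    | ⟨_, ⟨⟨_, .a d e⟩, h⟩⟩ => .inr ⟨⟨(d.size, e.size), HasAntidiagonal.mem_antidiagonal.2 h⟩,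
        ⟨_, ⟨⟨_, d⟩, rfl⟩⟩, ⟨_, ⟨⟨_, e⟩, rfl⟩⟩⟩
  invFun
    | .inl h => ⟨1, ⟨⟨.leaf, .v⟩, h.down.symm⟩⟩
    | .inr ⟨m, ⟨j, ⟨⟨p, d⟩, hd⟩⟩, ⟨k, ⟨⟨q, e⟩, he⟩⟩⟩ =>
      ⟨j + k, ⟨⟨.app p q, .a d e⟩, by
        rw [Col.size, hd, he]
        exact HasAntidiagonal.mem_antidiagonal.1 m.2⟩⟩
  left_inv := by rintro ⟨_, ⟨⟨_, _ | _⟩, _⟩⟩ <;> rfl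
  right_inv := by
    rintro (_ | ⟨⟨⟨_, _⟩, _⟩, ⟨_, ⟨⟨_, _⟩, hd⟩⟩, ⟨_, ⟨⟨_, _⟩, he⟩⟩⟩)
    · rfl
    · dsimp only at hd he
      subst hd he
      rfl

theorem finite_coloringsOfSize_of_finite_colorings {c : Color} {n : ℕ}
    (h : ∀ i, Finite (Colorings c n i)) : Finite (ColoringsOfSize c n) := by
  have hdeg (x : ColoringsOfSize c n) : x.1 < n + 2 := by
    by_contra hx
    exact (isEmpty_colorings_of_lt (by omega)).false x.2
  refine Finite.of_injective (β := (i : Fin (n + 2)) × Colorings c n i)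
    (fun x => ⟨⟨x.1, hdeg x⟩, x.2⟩) ?_
  rintro ⟨i, x⟩ ⟨j, y⟩ hxy
  simp only [Sigma.mk.injEq, Fin.mk.injEq] at hxy
  obtain ⟨rfl, hxy⟩ := hxy
  rw [eq_of_heq hxy]

theorem finite_colorings_of_finite_coloringsOfSize {c : Color} {n : ℕ}
    [Finite (ColoringsOfSize c n)] (i : ℕ) : Finite (Colorings c n i) :=
  Finite.of_injective (Sigma.mk i) sigma_mk_injective

theorem finite_colorings_R_succ {n : ℕ} [Finite (ColoringsOfSize Color.B n)] (i : ℕ) :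
    Finite (Colorings Color.R (n + 1) i) := by
  have hdesc : ∀ k i, n + 3 ≤ i + k → Finite (Colorings Color.R (n + 1) i) := by
    intro k
    induction k with
    | zero =>
      intro i hi
      have := isEmpty_colorings_of_lt (c := Color.R) (n := n + 1) (i := i) (by omega)
      infer_instance
    | succ k ih =>
      intro i hi
      have := finite_colorings_of_finite_coloringsOfSize (c := Color.B) (n := n) i
      have := ih (i + 1) (by omega)
      exact Finite.of_equiv _ (coloringsRSuccEquiv n i).symm
  exact hdesc (n + 3) i (by omega)

theorem finite_coloringsOfSize_B_and_R (n : ℕ) :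
    Finite (ColoringsOfSize Color.B n) ∧ Finite (ColoringsOfSize Color.R n) := by
  induction n using Nat.strong_induction_on with
  | _ n ih =>
  have hR : Finite (ColoringsOfSize Color.R n) := by
    refine finite_coloringsOfSize_of_finite_colorings fun i => ?_
    rcases n with _ | n
    · have := isEmpty_colorings_R_zero i
      infer_instance
    · have := (ih n n.lt_succ_self).1
      exact finite_colorings_R_succ i
  refine ⟨?_, hR⟩
  have (m : antidiagonal n) :
      Finite (ColoringsOfSize Color.B m.1.1 × ColoringsOfSize Color.R m.1.2) := by
    obtain ⟨⟨m₁, m₂⟩, hm⟩ := m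
    rw [HasAntidiagonal.mem_antidiagonal] at hm
    rcases Nat.eq_zero_or_pos m₂ with rfl | hm₂
    · have := isEmpty_coloringsOfSize_R_zero
      infer_instance
    · have := (ih m₁ (by omega)).1
      have : Finite (ColoringsOfSize Color.R m₂) := by
        rcases (show m₂ < n ∨ m₂ = n by omega) with h | rfl
        exacts [(ih m₂ h).2, hR]
      infer_instance
  exact Finite.of_equiv _ (coloringsOfSizeBEquiv n).symm

instance (c : Color) (n : ℕ) : Finite (ColoringsOfSize c n) := by
  cases c
  exacts [(finite_coloringsOfSize_B_and_R n).1, (finite_coloringsOfSize_B_and_R n).2]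

noncomputable instance (c : Color) (n : ℕ) : Fintype (ColoringsOfSize c n) := Fintype.ofFinite _

instance (c : Color) (n i : ℕ) : Finite (Colorings c n i) :=
  finite_colorings_of_finite_coloringsOfSize i

theorem colCount_R_zero (i : ℕ) : colCount Color.R 0 i = 0 :=
  @Nat.card_of_isEmpty _ (isEmpty_colorings_R_zero i)

theorem colCount_R_succ (n i : ℕ) :
    colCount Color.R (n + 1) i = colCount Color.B n i + colCount Color.R (n + 1) (i + 1) := by
  rw [colCount, Nat.card_congr (coloringsRSuccEquiv n i), Nat.card_sum]
  rfl

noncomputable def colPoly (c : Color) (n : ℕ) : ℚ[X] :=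
  ∑ t : ColoringsOfSize c n, Polynomial.X ^ t.1

theorem coeff_colPoly (c : Color) (n i : ℕ) : (colPoly c n).coeff i = colCount c n i := by
  rw [colPoly, Polynomial.coeff_sum_X_pow, Nat.card_congr (Equiv.sigmaSubtype i)]
  rfl

theorem colPoly_R_zero : colPoly Color.R 0 = 0 := by
  have := isEmpty_coloringsOfSize_R_zero
  simp [colPoly]

theorem colPoly_R_succ (n : ℕ) :
    (Polynomial.X - 1) * colPoly Color.R (n + 1) =
      Polynomial.X * colPoly Color.B n - Polynomial.C (colCount Color.R (n + 1) 0 : ℚ) := by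
  ext (_ | k)
  · simp [Polynomial.mul_coeff_zero, coeff_colPoly]
  · simp [sub_mul, Polynomial.coeff_X_mul, coeff_colPoly, colCount_R_succ n k]

theorem colPoly_B (n : ℕ) :
    colPoly Color.B n = (if n = 0 then Polynomial.X else 0) +
      ∑ m ∈ antidiagonal n, colPoly Color.B m.1 * colPoly Color.R m.2 := by
  rw [colPoly, Fintype.sum_equiv (coloringsOfSizeBEquiv n) _
    (Sum.elim (fun _ => Polynomial.X) fun x => Polynomial.X ^ x.2.1.1 * Polynomial.X ^ x.2.2.1)
    (by rintro ⟨_, ⟨⟨_, _ | _⟩, _⟩⟩ <;> simp [coloringsOfSizeBEquiv, pow_add]),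
    Fintype.sum_sum_type, Fintype.sum_sigma]
  congr 1
  · split_ifs with h <;> simp [h]
  · rw [← Finset.sum_coe_sort (antidiagonal n)]
    simp [colPoly, Fintype.sum_prod_type, Finset.sum_mul_sum]

section GeneratingFunctions

open PowerSeries

noncomputable def colGF (c : Color) : ℚ[X]⟦X⟧ := mk (colPoly c)

theorem colGF_B : colGF Color.B = C Polynomial.X + colGF Color.B * colGF Color.R := by
  ext n : 1
  simp [colGF, coeff_mul, colPoly_B n, coeff_C]

theorem colGF_R : (C Polynomial.X - 1) * colGF Color.R =
    C Polynomial.X * (X * colGF Color.B) - map Polynomial.C R0 := by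
  rw [← map_one C, ← map_sub]
  ext (_ | n) : 1 <;> rw [coeff_C_mul, map_sub, coeff_map] <;> simp only [colGF, R0, coeff_mk]
  · simp [colPoly_R_zero, colCount_R_zero]
  · rw [coeff_C_mul, coeff_succ_X_mul, coeff_mk, colPoly_R_succ]

theorem colGF_R_quadratic :
    (C Polynomial.X - 1) * colGF Color.R ^ 2
      + (map Polynomial.C R0 - C Polynomial.X + 1) * colGF Color.R
      + (C Polynomial.X ^ 2 * X - map Polynomial.C R0) = 0 := by
  linear_combination (colGF Color.R - 1) * colGF_R - C Polynomial.X * X * colGF_B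

noncomputable def discrSqrt : ℚ[X]⟦X⟧ :=
  2 * (C Polynomial.X - 1) * colGF Color.R + (map Polynomial.C R0 - C Polynomial.X + 1)

theorem discrSqrt_sq :
    discrSqrt ^ 2 = (quadDiscr R0 X).eval₂ (map Polynomial.C) (C Polynomial.X) := by
  simp only [discrSqrt, quadDiscr, Polynomial.X_pow_mul_C, Polynomial.eval₂_sub,
    Polynomial.eval₂_pow, Polynomial.eval₂_add, Polynomial.eval₂_C, Polynomial.eval₂_X,
    Polynomial.eval₂_one, Polynomial.eval₂_mul, Polynomial.eval₂_ofNat, map_X]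
  linear_combination 4 * (C Polynomial.X - 1) * colGF_R_quadratic

theorem constantCoeff_discrSqrt :
    constantCoeff discrSqrt = Polynomial.C 1 - Polynomial.X := by
  have hR0 : constantCoeff (map Polynomial.C R0) = 0 := by
    rw [← coeff_zero_eq_constantCoeff_apply, coeff_map, R0, coeff_mk, colCount_R_zero]
    simp
  simp [discrSqrt, colGF, constantCoeff_mk, colPoly_R_zero, hR0, neg_add_eq_sub]

end GeneratingFunctions

/-- Proposition 2.10: `R₀(z) = −(1/(54z))(1 − 18z − (1−12z)^{3/2})`, stated
as the algebraic identity `(54·z·R₀(z) + 1 − 18·z)² = (1 − 12·z)³`. -/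
theorem R0_algebraic_identity :
    (54 * PowerSeries.X * R0 + 1 - 18 * PowerSeries.X) ^ 2
      = (1 - 12 * PowerSeries.X) ^ 3 := by
  obtain ⟨Y, hY0, hY⟩ :=
    PowerSeries.exists_substPolyVar_eq_zero discrSqrt 1 constantCoeff_discrSqrt
  obtain ⟨h, h'⟩ :=
    PowerSeries.eval_eq_zero_and_derivative_eval_eq_zero_of_sq_eq discrSqrt_sq hY
  refine sq_eq_cube_of_quadDiscr_double_root ?_ PowerSeries.X_ne_zero ?_ h h'
  · intro h2
    have := congrArg PowerSeries.constantCoeff h2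
    rw [map_ofNat, map_zero] at this
    norm_num at this
  · rintro rfl
    simp at hY0
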